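/- arXiv:1004.1883 — 2 statements merged into one kernel-verified Lean document; each statement's English description precedes it below -/
import Mathlib

section
/- Let ρ : {1,2,3,…} → ℝ and let F(z) = ∑_{n≥1} ( ∑_{T plane tree, |T|=n} (∏_{v∈T} 1/d(v)!)·(∏_{v∈T} ρ(h_v)) ) z^n be the formal power series over ℝ whose n-th coefficient is the total weight of all plane trees of size n, where each tree carries the degree weight ∏_v 1/d(v)! and the hook weight ∏_v ρ(h_v). Then for every n ≥ 1, [z^n]F(z) = ρ(n)·[z^{n-1}]exp(F(z)), where exp(F) = ∑_{k≥0} F^k/k! is the formal exponential of F. -/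
/-- A plane tree (ordered rooted tree): a root together with a finite
sequence of plane trees (its root subtrees). -/
inductive PlaneTree : Type where
  | node : List PlaneTree → PlaneTree

namespace PlaneTree

/-- The size of a plane tree: its number of vertices. -/
def size : PlaneTree → ℕ
  | node ts => 1 + (ts.attach.map fun t => size t.1).sum
decreasing_by simp only [PlaneTree.node.sizeOf_spec]; have := List.sizeOf_lt_of_mem t.2; omega

/-- The degree weight `w_deg(T) = ∏_{v ∈ T} φ_{d(v)}`, where `d(v)` is the
out-degree of the vertex `v`. -/
noncomputable def degWeight (φ : ℕ → ℝ) : PlaneTree → ℝ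
  | node ts => φ ts.length * (ts.attach.map fun t => degWeight φ t.1).prod
decreasing_by simp only [PlaneTree.node.sizeOf_spec]; have := List.sizeOf_lt_of_mem t.2; omega

/-- The hook weight `w_h(T) = ∏_{v ∈ T} ρ(h_v)`, where the hook length `h_v`
is the number of vertices of the subtree of `T` rooted at `v`. -/
noncomputable def hookWeight (ρ : ℕ → ℝ) : PlaneTree → ℝ
  | node ts => ρ (size (node ts)) * (ts.attach.map fun t => hookWeight ρ t.1).prod
decreasing_by simp only [PlaneTree.node.sizeOf_spec]; have := List.sizeOf_lt_of_mem t.2; omega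

end PlaneTree

/-- Composition `∑_{k ≥ 0} c_k F^k` of a coefficient sequence `c` with a formal
power series `F` having zero constant term. -/
noncomputable def seriesComp (c : ℕ → ℝ) (F : PowerSeries ℝ) : PowerSeries ℝ :=
  PowerSeries.mk fun n => ∑ k ∈ Finset.range (n + 1), c k * (PowerSeries.coeff n) (F ^ k)

/-!
Deleting the root of a plane tree of size `n` with `k` children leaves an ordered list of `k`
plane trees of total size `n - 1`, and this is a bijection. The root contributes the factor
`φ k * ρ n` and the list the product of the weights of its trees; summing such products over all
lists of length `k` and total size `m` gives `[z^m] F^k`. Hence `[zⁿ]F = ρ n * ∑ₖ φ k [z^(n-1)] F^k`.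
-/

open PowerSeries Finset

theorem List.finite_length_le_forall_mem {α : Type*} {S : Set α} (hS : S.Finite) (n : ℕ) :
    {l : List α | l.length ≤ n ∧ ∀ a ∈ l, a ∈ S}.Finite := by
  have := hS.to_subtype
  refine ((List.finite_length_le S n).image (List.map Subtype.val)).subset ?_
  rintro l ⟨hlen, hmem⟩
  exact ⟨l.attach.map fun a => ⟨a.1, hmem _ a.2⟩, by simpa using hlen, by simp⟩

section SizedLists

variable {α : Type*} {size : α → ℕ}

theorem finite_length_eq_sum_size_eq_sum_sizedLists (hsize : ∀ n, {a | size a = n}.Finite) (k m : ℕ) :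
    {l : List α | l.length = k ∧ (l.map size).sum = m}.Finite := by
  have hle : {a | size a ≤ m}.Finite :=
    ((Set.finite_le_nat m).biUnion fun i _ => hsize i).subset fun a ha => Set.mem_biUnion ha rfl
  refine (List.finite_length_le_forall_mem hle k).subset ?_
  rintro l ⟨hlen, hsum⟩
  exact ⟨hlen.le, fun a ha =>
    hsum ▸ List.single_le_sum (fun _ _ => Nat.zero_le _) _ (List.mem_map_of_mem ha)⟩

noncomputable def sizedLists (hsize : ∀ n, {a | size a = n}.Finite) (k m : ℕ) : Finset (List α) :=
  (finite_length_eq_sum_size_eq_sum_sizedLists hsize k m).toFinset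

variable {hsize : ∀ n, {a | size a = n}.Finite}

@[simp] theorem mem_sizedLists {k m : ℕ} {l : List α} :
    l ∈ sizedLists hsize k m ↔ l.length = k ∧ (l.map size).sum = m :=
  Set.Finite.mem_toFinset _

theorem sizedLists_zero (m : ℕ) : sizedLists hsize 0 m = if m = 0 then {[]} else ∅ := by
  ext l
  split_ifs with hm
  · simp only [hm, mem_sizedLists, List.length_eq_zero_iff, mem_singleton, and_iff_left_iff_imp]
    rintro rfl
    rfl
  · simp only [mem_sizedLists, List.length_eq_zero_iff, notMem_empty, iff_false, not_and]
    rintro rfl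
    exact Ne.symm hm

theorem sum_sizedLists_succ {M : Type*} [AddCommMonoid M] (f : List α → M) (k m : ℕ) :
    ∑ l ∈ sizedLists hsize (k + 1) m, f l
      = ∑ p ∈ antidiagonal m,
          ∑ a ∈ (hsize p.1).toFinset, ∑ l ∈ sizedLists hsize k p.2, f (a :: l) := by
  simp_rw [← sum_product', sum_sigma']
  symm
  refine sum_bij (fun x _ => x.2.1 :: x.2.2) ?_ ?_ ?_ (fun _ _ => rfl)
  · rintro ⟨⟨i, j⟩, a, l⟩ hx
    simp_all
  · rintro ⟨⟨i, j⟩, a, l⟩ hx ⟨⟨i', j'⟩, a', l'⟩ hx' h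
    simp_all
  · rintro l hl
    obtain ⟨a, t, rfl⟩ := List.exists_cons_of_length_eq_add_one (mem_sizedLists.1 hl).1
    exact ⟨⟨(size a, (t.map size).sum), a, t⟩, by simp_all, rfl⟩

theorem coeff_pow_eq_sum_sizedLists {R : Type*} [CommSemiring R] (w : α → R) {G : R⟦X⟧}
    (hG : ∀ n, coeff n G = ∑ a ∈ (hsize n).toFinset, w a) (k m : ℕ) :
    coeff m (G ^ k) = ∑ l ∈ sizedLists hsize k m, (l.map w).prod := by
  induction k generalizing m with
  | zero =>
    rw [sizedLists_zero]
    split_ifs with hm <;> simp [coeff_one, hm]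
  | succ k ih =>
    rw [pow_succ', coeff_mul, sum_sizedLists_succ]
    refine sum_congr rfl fun p _ => ?_
    simp [hG, ih, sum_mul_sum]

end SizedLists

namespace PlaneTree

theorem size_node (ts : List PlaneTree) : (node ts).size = 1 + (ts.map size).sum := by
  rw [size, List.attach_map_val]

theorem degWeight_node (φ : ℕ → ℝ) (ts : List PlaneTree) :
    degWeight φ (node ts) = φ ts.length * (ts.map (degWeight φ)).prod := by
  rw [degWeight, List.attach_map_val]

theorem hookWeight_node (ρ : ℕ → ℝ) (ts : List PlaneTree) :
    hookWeight ρ (node ts) = ρ (node ts).size * (ts.map (hookWeight ρ)).prod := by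
  rw [hookWeight, List.attach_map_val]

theorem one_le_size (T : PlaneTree) : 1 ≤ T.size := by
  cases T
  rw [size_node]
  omega

theorem length_le_sum_map_size (ts : List PlaneTree) : ts.length ≤ (ts.map size).sum := by
  induction ts with
  | nil => simp
  | cons t ts ih =>
    simp only [List.length_cons, List.map_cons, List.sum_cons]
    have := one_le_size t
    omega

theorem finite_setOf_size_le : ∀ n : ℕ, {T : PlaneTree | T.size ≤ n}.Finite
  | 0 => Set.finite_empty.subset fun T (hT : T.size ≤ 0) => (one_le_size T).not_gt (by omega)
  | n + 1 => by
    refine ((List.finite_length_le_forall_mem (finite_setOf_size_le n) n).image node).subset ?_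
    rintro ⟨ts⟩ hT
    rw [Set.mem_ofPred_eq, size_node] at hT
    refine ⟨ts, ⟨by linarith [length_le_sum_map_size ts], fun t ht => ?_⟩, rfl⟩
    have := List.single_le_sum (fun _ _ => Nat.zero_le _) _ (List.mem_map_of_mem (f := size) ht)
    exact Set.mem_ofPred.2 (by omega)

theorem finite_setOf_size_eq (n : ℕ) : {T : PlaneTree | T.size = n}.Finite :=
  (finite_setOf_size_le n).subset fun _ h => h.le

theorem sum_size_eq_sum_sizedLists {M : Type*} [AddCommMonoid M] (f : PlaneTree → M) {n : ℕ} (hn : 1 ≤ n) :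
    ∑ T ∈ (finite_setOf_size_eq n).toFinset, f T
      = ∑ k ∈ range n, ∑ l ∈ sizedLists finite_setOf_size_eq k (n - 1), f (node l) := by
  rw [sum_sigma']
  symm
  refine sum_bij (fun x _ => node x.2) ?_ ?_ ?_ (fun _ _ => rfl)
  · rintro ⟨k, l⟩ hx
    simp_all [size_node]
  · rintro ⟨k, l⟩ hx ⟨k', l'⟩ hx' h
    simp_all
  · rintro ⟨ts⟩ hT
    simp only [Set.Finite.mem_toFinset, Set.mem_ofPred_eq, size_node] at hT
    refine ⟨⟨ts.length, ts⟩, ?_, rfl⟩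
    have := length_le_sum_map_size ts
    simp only [mem_sigma, mem_range, mem_sizedLists, true_and]
    omega

theorem hook_length_formula (φ ρ : ℕ → ℝ) {F : ℝ⟦X⟧}
    (hF : ∀ n, coeff n F = ∑ T ∈ (finite_setOf_size_eq n).toFinset,
      degWeight φ T * hookWeight ρ T) {n : ℕ} (hn : 1 ≤ n) :
    coeff n F = ρ n * coeff (n - 1) (seriesComp φ F) := by
  have hw (ts : List PlaneTree) (hts : (node ts).size = n) :
      degWeight φ (node ts) * hookWeight ρ (node ts)
        = ρ n * (φ ts.length * (ts.map fun T => degWeight φ T * hookWeight ρ T).prod) := by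
    rw [degWeight_node, hookWeight_node, hts, List.prod_map_mul]
    ring
  rw [hF, sum_size_eq_sum_sizedLists _ hn, seriesComp, coeff_mk, Nat.sub_add_cancel hn, mul_sum]
  refine sum_congr rfl fun k _ => ?_
  rw [coeff_pow_eq_sum_sizedLists _ hF, mul_sum, mul_sum]
  refine sum_congr rfl fun l hl => ?_
  rw [mem_sizedLists] at hl
  rw [hw l (by rw [size_node, hl.2]; omega), hl.1]

end PlaneTree

/-- **Hook length formula for labelled (Cayley) trees** (the case `φ(t) = eᵗ`,
degree weights `φ_k = 1/k!`). If
`F(z) = ∑_{n≥1} (∑_{|T|=n} (∏_{v∈T} 1/d(v)!)(∏_{v∈T} ρ(h_v))) zⁿ`, then for all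
`n ≥ 1`, `[zⁿ]F(z) = ρ(n) · [z^{n-1}] exp(F(z))` with `exp(F) = ∑_{k≥0} F^k/k!`. -/
theorem hook_length_labelled_trees
    (ρ : ℕ → ℝ) (F : PowerSeries ℝ)
    (hF : F = PowerSeries.mk fun n =>
      ∑' T : {T : PlaneTree // T.size = n},
        T.1.degWeight (fun k => ((Nat.factorial k : ℝ))⁻¹) * T.1.hookWeight ρ)
    (n : ℕ) (hn : 1 ≤ n) :
    (PowerSeries.coeff n) F
      = ρ n * (PowerSeries.coeff (n - 1))
          (seriesComp (fun k => ((Nat.factorial k : ℝ))⁻¹) F) := by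
  refine PlaneTree.hook_length_formula _ ρ (fun m => ?_) hn
  let _ : Fintype {T : PlaneTree // T.size = m} := (PlaneTree.finite_setOf_size_eq m).fintype
  rw [hF, coeff_mk, tsum_fintype]
  exact (sum_subtype (p := fun T : PlaneTree => T.size = m) _ (fun _ => Set.Finite.mem_toFinset _)
    fun T => T.degWeight _ * T.hookWeight ρ).symm
end

section
/- Let α > 0 be a real number and let T be a formal power series over ℝ with zero constant term satisfying T'(z) · ∑_{k≥0} C(α,k)·(−1)^k·T(z)^k = 1, i.e. T' · (1−T)^α = 1 where (1−T)^α is defined by the binomial series (this is the formal version of the differential equation T'(z) = (1−T(z))^{−α} with T(0)=0). Then for every n ≥ 1, n!·[z^n]T(z) = (α+1)^{n-1}·(n−1)!·C(n−1−1/(α+1), n−1), where C(x,k) = x(x−1)⋯(x−k+1)/k! denotes the generalized binomial coefficient. In particular T(z) = 1 − (1−(α+1)z)^{1/(α+1)} as a formal binomial series. -/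
/-- The generalized binomial coefficient `C(x,k) = x(x−1)⋯(x−k+1)/k!` for real `x`. -/
noncomputable def genBinom (x : ℝ) (k : ℕ) : ℝ :=
  (∏ i ∈ Finset.range k, (x - i)) / Nat.factorial k

open PowerSeries

theorem Ring.succ_nsmul_choose_succ {R : Type*} [CommRing R] [BinomialRing R] (r : R) (n : ℕ) :
    (n + 1) • Ring.choose r (n + 1) = r * Ring.choose (r - 1) n := by
  simpa [Ring.choose_one_right] using Ring.choose_smul_choose r (Nat.le_add_left 1 n)

theorem Ring.factorial_mul_choose_inv_mul_neg_pow {K : Type*} [Field K] [CharZero K] {a : K}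
    (ha : a ≠ 0) (m : ℕ) :
    ((m + 1).factorial : K) * (Ring.choose a⁻¹ (m + 1) * (-a) ^ (m + 1))
      = -(a ^ m * m.factorial * Ring.choose ((m : K) - a⁻¹) m) := by
  have hsucc :
      ((m : K) + 1) * Ring.choose a⁻¹ (m + 1) = a⁻¹ * Ring.choose (a⁻¹ - 1) m := by
    simpa using Ring.succ_nsmul_choose_succ a⁻¹ m
  have hneg : Ring.choose (a⁻¹ - 1) m = (-1) ^ m * Ring.choose ((m : K) - a⁻¹) m := by
    have h := Ring.choose_neg (1 - a⁻¹) m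
    rwa [neg_sub, show 1 - a⁻¹ + m - 1 = (m : K) - a⁻¹ by ring, Units.smul_def, zsmul_eq_mul,
      Int.cast_negOnePow_natCast] at h
  calc ((m + 1).factorial : K) * (Ring.choose a⁻¹ (m + 1) * (-a) ^ (m + 1))
      = m.factorial * (-a) ^ (m + 1) * (((m : K) + 1) * Ring.choose a⁻¹ (m + 1)) := by
        push_cast [Nat.factorial_succ]
        ring
    _ = -(a * a⁻¹) * ((-1) ^ m * (-1) ^ m)
          * (a ^ m * m.factorial * Ring.choose ((m : K) - a⁻¹) m) := by
        rw [hsucc, hneg]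
        ring
    _ = -(a ^ m * m.factorial * Ring.choose ((m : K) - a⁻¹) m) := by
        rw [mul_inv_cancel₀ ha, ← mul_pow, mul_neg_one, neg_neg, one_pow]
        ring

theorem genBinom_eq_choose (x : ℝ) (k : ℕ) : genBinom x k = Ring.choose x k := by
  rw [Ring.choose_eq_smul, genBinom, ← descPochhammer_eval_eq_prod_range,
    ← Polynomial.aeval_eq_smeval, Polynomial.aeval_def, ← Polynomial.eval_map,
    descPochhammer_map, smul_eq_mul, inv_mul_eq_div]

namespace PowerSeries

section CommSemiring

variable {A : Type*} [CommSemiring A]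

theorem rescale_C (a r : A) : rescale a (C r) = C r := by
  ext n
  rcases n with _ | n <;> simp [coeff_rescale, coeff_C]

theorem derivative_rescale (a : A) (f : A⟦X⟧) :
    d⁄dX A (rescale a f) = C a * rescale a (d⁄dX A f) := by
  ext n
  simp only [coeff_derivative, coeff_rescale, pow_succ, coeff_C_mul]
  ring

theorem coeff_pow_eq_zero_of_lt {H : A⟦X⟧} (hH : constantCoeff H = 0) {n k : ℕ} (h : n < k) :
    coeff n (H ^ k) = 0 :=
  X_pow_dvd_iff.1 (pow_dvd_pow_of_dvd (X_dvd_iff.2 hH) k) n h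

end CommSemiring

section CommRing

variable {A : Type*} [CommRing A]

theorem constantCoeff_subst_of_constantCoeff_zero {H : A⟦X⟧} (hH : constantCoeff H = 0)
    (f : A⟦X⟧) : constantCoeff (f.subst H) = constantCoeff f := by
  have h := constantCoeff_subst_eq_zero hH (f - C (constantCoeff f)) (by simp)
  rw [subst_sub (HasSubst.of_constantCoeff_zero' hH), subst_C, map_sub, sub_eq_zero] at h
  simp only [MvPowerSeries.constantCoeff_C] at h
  exact h

theorem subst_one_add_X {H : A⟦X⟧} (hH : HasSubst H) : (1 + X : A⟦X⟧).subst H = 1 + H := by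
  rw [subst_add hH, subst_X hH, ← map_one C, subst_C]
  rfl

variable {R : Type*} [CommRing R] [BinomialRing R] [Algebra R A]

theorem derivative_binomialSeries (r : R) :
    d⁄dX A (binomialSeries A r) = C (algebraMap R A r) * binomialSeries A (r - 1) := by
  ext n
  have h := Ring.succ_nsmul_choose_succ r n
  rw [nsmul_eq_mul] at h
  simp only [coeff_derivative, coeff_C_mul, binomialSeries_coeff, Algebra.smul_def, mul_one]
  rw [← map_mul, ← h, map_mul, map_natCast, mul_comm]
  push_cast
  ring

theorem one_add_X_mul_binomialSeries (r : R) :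
    (1 + X) * binomialSeries A r = binomialSeries A (r + 1) := by
  have h : binomialSeries A (1 : R) = 1 + X := by
    simpa using binomialSeries_nat (A := A) (R := R) 1
  rw [binomialSeries_add, h, mul_comm]

theorem derivative_subst_binomialSeries {H : A⟦X⟧} (hH : HasSubst H) (r : R) :
    d⁄dX A ((binomialSeries A r).subst H)
      = C (algebraMap R A r) * (binomialSeries A (r - 1)).subst H * d⁄dX A H := by
  rw [derivative_subst hH, derivative_binomialSeries, subst_mul hH, subst_C]
  rfl

theorem one_add_mul_subst_binomialSeries {H : A⟦X⟧} (hH : HasSubst H) (r : R) :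
    (1 + H) * (binomialSeries A r).subst H = (binomialSeries A (r + 1)).subst H := by
  rw [← one_add_X_mul_binomialSeries, subst_mul hH, subst_one_add_X hH]

end CommRing

section Field

variable {K : Type*} [Field K] [CharZero K]

theorem eq_of_one_sub_C_mul_X_mul_derivative_eq {a : K} {F G : K⟦X⟧}
    (hF : (1 - C a * X) * d⁄dX K F = 1 - F) (hG : (1 - C a * X) * d⁄dX K G = 1 - G)
    (h0 : constantCoeff F = constantCoeff G) : F = G := by
  rw [← sub_eq_zero]
  set D := F - G
  have hD : (1 - C a * X) * d⁄dX K D = -D := by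
    simp only [D, map_sub, mul_sub, hF, hG]
    ring
  ext n
  induction n with
  | zero => simp [D, h0]
  | succ n ih =>
    -- the coefficient of `zⁿ` in `hD` reads `(n + 1) dₙ₊₁ - a n dₙ = -dₙ`
    have hn := congrArg (coeff n) hD
    have hXD : coeff n (X * d⁄dX K D) = 0 := by
      cases n with
      | zero => exact coeff_zero_X_mul _
      | succ m => rw [coeff_succ_X_mul, coeff_derivative, ih, map_zero, zero_mul]
    rw [sub_mul, one_mul, mul_assoc, map_sub, coeff_C_mul, hXD, coeff_derivative, map_neg, ih]
      at hn
    simpa [Nat.cast_add_one_ne_zero] using hn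

theorem one_sub_C_mul_X_mul_derivative_eq_of_derivative_mul_subst_binomialSeries {a : K}
    {T : K⟦X⟧} (hT0 : constantCoeff T = 0)
    (hode : d⁄dX K T * (binomialSeries K a).subst (-T) = 1) :
    (1 - C (a + 1) * X) * d⁄dX K T = 1 - T := by
  have hT : HasSubst (-T) := HasSubst.of_constantCoeff_zero' (by simp [hT0])
  have hV : (binomialSeries K (a + 1)).subst (-T) = 1 - C (a + 1) * X := by
    apply derivative.ext
    · rw [derivative_subst_binomialSeries hT, add_sub_cancel_right, map_neg, mul_neg,
        mul_assoc, mul_comm _ (d⁄dX K T), hode]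
      simp
    · simp [constantCoeff_subst_of_constantCoeff_zero (by simp [hT0] : constantCoeff (-T) = 0)]
  rw [← hV, ← one_add_mul_subst_binomialSeries hT, mul_comm, ← mul_assoc, mul_comm _ (1 + -T)]
  simp [mul_assoc, hode, sub_eq_add_neg]

theorem one_sub_C_mul_X_mul_derivative_one_sub_rescale_binomialSeries {a : K} (ha : a ≠ 0) :
    (1 - C a * X) * d⁄dX K (1 - rescale (-a) (binomialSeries K a⁻¹))
      = 1 - (1 - rescale (-a) (binomialSeries K a⁻¹)) := by
  rw [sub_sub_cancel]
  have hlin : (1 - C a * X : K⟦X⟧) = rescale (-a) (1 + X) := by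
    simp [rescale_X, sub_eq_add_neg]
  rw [map_sub, Derivation.map_one_eq_zero, zero_sub, derivative_rescale, derivative_binomialSeries,
    hlin]
  nth_rw 3 [← sub_add_cancel a⁻¹ 1]
  rw [← one_add_X_mul_binomialSeries, map_mul, map_mul, Algebra.algebraMap_self, RingHom.id_apply]
  have hscalar : C (-a) * rescale (-a) (C a⁻¹) = (-1 : K⟦X⟧) := by
    rw [rescale_C, ← map_mul, neg_mul, mul_inv_cancel₀ ha, map_neg, map_one]
  linear_combination (-rescale (-a) (1 + X) * rescale (-a) (binomialSeries K (a⁻¹ - 1))) * hscalar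

end Field

end PowerSeries

theorem seriesComp_eq_subst (c : ℕ → ℝ) {H : ℝ⟦X⟧} (hH : constantCoeff H = 0) :
    seriesComp c H = (mk c).subst H := by
  ext n
  rw [seriesComp, coeff_mk, coeff_subst' (HasSubst.of_constantCoeff_zero' hH),
    finsum_eq_sum_of_support_subset (s := Finset.range (n + 1))]
  · simp
  · intro d hd
    by_contra h
    simp only [Finset.coe_range, Set.mem_Iio, not_lt] at h
    simp [coeff_pow_eq_zero_of_lt hH (Nat.lt_of_succ_le h)] at hd

theorem seriesComp_neg (c : ℕ → ℝ) (H : ℝ⟦X⟧) :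
    seriesComp c (-H) = seriesComp (fun k => c k * (-1) ^ k) H := by
  ext n
  simp only [seriesComp, coeff_mk]
  refine Finset.sum_congr rfl fun k _ => ?_
  rw [neg_pow, ← map_one C, ← map_neg C, ← map_pow, coeff_C_mul]
  ring

theorem PowerSeries.binomialSeries_eq_mk_genBinom (x : ℝ) :
    PowerSeries.binomialSeries ℝ x = mk (genBinom x) := by
  ext n
  simp [genBinom_eq_choose]

/-- **Solution of the increasing-tree differential equation `T' = (1−T)^{−α}`.**
If `T` is a formal power series with zero constant term satisfying
`T'·(1−T)^α = 1` (with `(1−T)^α = ∑_k C(α,k)(−1)^k T^k` the binomial series),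
then `n!·[zⁿ]T(z) = (α+1)^{n-1}(n−1)! C(n−1−1/(α+1), n−1)` for all `n ≥ 1`;
in particular `T(z) = 1 − (1−(α+1)z)^{1/(α+1)}` as a formal binomial series. -/
theorem increasing_trees_ode_solution
    (α : ℝ) (hα : 0 < α) (T : PowerSeries ℝ)
    (hT0 : PowerSeries.constantCoeff T = 0)
    (hode : PowerSeries.derivative ℝ T
        * seriesComp (fun k => genBinom α k * (-1 : ℝ) ^ k) T = 1) :
    (∀ n : ℕ, 1 ≤ n →
      (Nat.factorial n : ℝ) * (PowerSeries.coeff n) T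
        = (α + 1) ^ (n - 1) * (Nat.factorial (n - 1) : ℝ)
            * genBinom ((n : ℝ) - 1 - 1 / (α + 1)) (n - 1))
    ∧ T = 1 - PowerSeries.mk (fun k => genBinom (1 / (α + 1)) k * (-(α + 1)) ^ k) := by
  have ha : α + 1 ≠ 0 := by positivity
  rw [← seriesComp_neg, seriesComp_eq_subst _ (by simp [hT0]),
    ← binomialSeries_eq_mk_genBinom] at hode
  have hT := one_sub_C_mul_X_mul_derivative_eq_of_derivative_mul_subst_binomialSeries hT0 hode
  have hS := one_sub_C_mul_X_mul_derivative_one_sub_rescale_binomialSeries ha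
  have hW : rescale (-(α + 1)) (PowerSeries.binomialSeries ℝ (α + 1)⁻¹)
      = mk (fun k => genBinom (1 / (α + 1)) k * (-(α + 1)) ^ k) := by
    ext n
    simp [coeff_rescale, genBinom_eq_choose, mul_comm]
  rw [hW] at hS
  have hTS := eq_of_one_sub_C_mul_X_mul_derivative_eq hT hS (by simp [hT0, genBinom])
  refine ⟨fun n hn => ?_, hTS⟩
  obtain ⟨m, rfl⟩ := Nat.exists_eq_add_of_le' hn
  have hcoeff := Ring.factorial_mul_choose_inv_mul_neg_pow ha m
  rw [hTS, map_sub, coeff_one, if_neg (Nat.succ_ne_zero m), coeff_mk, zero_sub, mul_neg]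
  simp only [Nat.add_sub_cancel, genBinom_eq_choose, one_div, Nat.cast_succ, add_sub_cancel_right]
  linear_combination -hcoeff
end
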